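/- arXiv:1504.07169 — 4 statements merged into one kernel-verified Lean document; each statement's English description precedes it below -/
import Mathlib

section
/- Let f : A → B be a ring homomorphism that is an epimorphism in the category of rings. Then for any two right B-modules M and N, every A-linear map M → N (where M, N are viewed as A-modules via restriction along f) is automatically B-linear. -/
/-!
An additive map `φ : M → N` between `B`-modules commutes with the action of `c : B` exactly when
the shear `(m, n) ↦ (m, n + φ m)` of `M × N` commutes with the diagonal action of `c` in
`End_ℤ(M × N)`. Conjugating the diagonal action `B →+* End_ℤ(M × N)` by the shear gives a second
ring homomorphism; `A`-linearity of `φ` says that the two agree after composing with `f`, so they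
are equal because `f` is an epimorphism.
-/

/-- A ring epimorphism: an epimorphism in the category of unital rings. -/
def IsRingEpi {A B : Type} [Ring A] [Ring B] (f : A →+* B) : Prop :=
  ∀ (C : Type) [Ring C], ∀ g h : B →+* C, g.comp f = h.comp f → g = h

theorem IsRingEpi.commute_of_forall_commute {A B C : Type} [Ring A] [Ring B] [Ring C]
    {f : A →+* B} (hf : IsRingEpi f) (ρ : B →+* C) (u : Cˣ)
    (hu : ∀ a, Commute (u : C) (ρ (f a))) (b : B) : Commute (u : C) (ρ b) := by
  let conj : C →+* C := MulSemiringAction.toRingHom (ConjAct Cˣ) C (ConjAct.toConjAct u)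
  have conj_eq_self_iff (x : C) : conj x = x ↔ Commute (u : C) x :=
    Units.mul_inv_eq_iff_eq_mul u
  have hρ : conj.comp ρ = ρ :=
    hf C _ _ <| RingHom.ext fun a => (conj_eq_self_iff _).2 (hu a)
  exact (conj_eq_self_iff _).1 (RingHom.congr_fun hρ b)

section Shear

variable {M N : Type} [AddCommGroup M] [AddCommGroup N]

def shear (φ : M →+ N) : (Module.End ℤ (M × N))ˣ :=
  LinearMap.GeneralLinearGroup.ofLinearEquiv <|
    (LinearEquiv.refl ℤ M).skewProd (LinearEquiv.refl ℤ N) φ.toIntLinearMap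

theorem shear_apply (φ : M →+ N) (p : M × N) :
    (shear φ : Module.End ℤ (M × N)) p = (p.1, p.2 + φ p.1) :=
  rfl

theorem commute_shear_toModuleEnd_iff {B : Type} [Ring B] [Module B M] [Module B N]
    (φ : M →+ N) (c : B) :
    Commute (shear φ : Module.End ℤ (M × N)) (Module.toModuleEnd ℤ (M × N) c) ↔
      ∀ m, φ (c • m) = c • φ m := by
  refine LinearMap.ext_iff.trans ⟨fun h m => ?_, fun h p => ?_⟩
  · simpa [shear_apply] using congrArg Prod.snd (h (m, 0))
  · simp [shear_apply, h]

end Shear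

theorem IsRingEpi.map_smul_of_map_smul_comp {A B : Type} [Ring A] [Ring B] {f : A →+* B}
    (hf : IsRingEpi f) {M N : Type} [AddCommGroup M] [AddCommGroup N] [Module B M] [Module B N]
    (φ : M →+ N) (hφ : ∀ a m, φ (f a • m) = f a • φ m) (b : B) (m : M) :
    φ (b • m) = b • φ m :=
  (commute_shear_toModuleEnd_iff φ b).1 (hf.commute_of_forall_commute _ _
    (fun a => (commute_shear_toModuleEnd_iff φ (f a)).2 (hφ a)) b) m

/-- If `f : A → B` is a ring epimorphism, then every `A`-linear map
between `B`-modules (viewed as `A`-modules by restriction along `f`) is `B`-linear. -/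
theorem linear_over_base_of_ringEpi
    (A B : Type) [Ring A] [Ring B] (f : A →+* B) (hf : IsRingEpi f)
    (M N : Type) [AddCommGroup M] [AddCommGroup N]
    [Module B M] [Module B N] [Module A M] [Module A N]
    (hM : ∀ (a : A) (m : M), a • m = f a • m)
    (hN : ∀ (a : A) (n : N), a • n = f a • n)
    (φ : M →ₗ[A] N) (b : B) (m : M) :
    φ (b • m) = b • φ m :=
  hf.map_smul_of_map_smul_comp φ.toAddMonoidHom
    (fun a x => by simpa [hM, hN] using φ.map_smul a x) b m
end

section
/- Let A be a ring, σ : P → Q a homomorphism of projective right A-modules, and ω : M → N a homomorphism between modules M, N for which Hom_A(σ, M) and Hom_A(σ, N) are bijective. If the class D_σ = {X : Hom_A(σ,X) surjective} is closed under quotients and the class F_σ = {X : Hom_A(σ,X) injective} is closed under submodules, then Hom_A(σ, Im(ω)), Hom_A(σ, Ker(ω)) and Hom_A(σ, Coker(ω)) are all bijective. -/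
/-!
Since `Im ω ≅ M ⧸ Ker ω` is a quotient of `M` and a submodule of `N`, it lies in `D_σ ∩ F_σ`.
For the kernel, a lift `g : Q → M` of `f : P → Ker ω` satisfies `(ω g) σ = 0`, so `ω g = 0` by
injectivity on `N`. For the cokernel, a map `g : Q → N ⧸ Im ω` with `g σ = 0` lifts to `h : Q → N`
since `Q` is projective; `h σ` lands in `Im ω`, hence equals `k σ` for some `k : Q → Im ω`, and
injectivity on `N` gives `h = k`, so `g = 0`.
-/

section

variable {A : Type*} [Ring A] {P Q : Type*} [AddCommGroup P] [AddCommGroup Q] [Module A P]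
  [Module A Q] (σ : P →ₗ[A] Q) {X Y : Type*} [AddCommGroup X] [Module A X] [AddCommGroup Y]
  [Module A Y]

lemma surjective_comp_right_of_linearEquiv (e : X ≃ₗ[A] Y)
    (hX : Function.Surjective (fun g : Q →ₗ[A] X => g.comp σ)) :
    Function.Surjective (fun g : Q →ₗ[A] Y => g.comp σ) := by
  intro f
  obtain ⟨g, hg⟩ := hX (e.symm.toLinearMap.comp f)
  refine ⟨e.toLinearMap.comp g, ?_⟩
  simp only at hg ⊢
  rw [LinearMap.comp_assoc, hg, ← LinearMap.comp_assoc, e.comp_symm, LinearMap.id_comp]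

lemma surjective_comp_right_ker (ω : X →ₗ[A] Y)
    (hX : Function.Surjective (fun g : Q →ₗ[A] X => g.comp σ))
    (hY : Function.Injective (fun g : Q →ₗ[A] Y => g.comp σ)) :
    Function.Surjective (fun g : Q →ₗ[A] LinearMap.ker ω => g.comp σ) := by
  intro f
  obtain ⟨g, hg⟩ := hX ((LinearMap.ker ω).subtype.comp f)
  simp only at hg ⊢
  have hωg : ω.comp g = 0 := hY <| by
    simp only [LinearMap.zero_comp, LinearMap.comp_assoc, hg]
    rw [← LinearMap.comp_assoc, LinearMap.comp_ker_subtype, LinearMap.zero_comp]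
  have hg_mem (q : Q) : g q ∈ LinearMap.ker ω := LinearMap.congr_fun hωg q
  refine ⟨g.codRestrict _ hg_mem, (LinearMap.cancel_left (LinearMap.ker ω).injective_subtype).mp ?_⟩
  rw [← LinearMap.comp_assoc, LinearMap.subtype_comp_codRestrict, hg]

lemma range_le_of_range_comp_le (S : Submodule A Y)
    (hS : Function.Surjective (fun g : Q →ₗ[A] S => g.comp σ))
    (hY : Function.Injective (fun g : Q →ₗ[A] Y => g.comp σ)) {h : Q →ₗ[A] Y}
    (hh : LinearMap.range (h.comp σ) ≤ S) : LinearMap.range h ≤ S := by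
  obtain ⟨k, hk⟩ := hS ((h.comp σ).codRestrict S fun p => hh (LinearMap.mem_range_self _ p))
  have : S.subtype.comp k = h := hY <| by
    simp only at hk ⊢
    rw [LinearMap.comp_assoc, hk, LinearMap.subtype_comp_codRestrict]
  rw [← this, LinearMap.range_comp]
  exact Submodule.map_subtype_le S _

lemma injective_comp_right_quotient [Module.Projective A Q] (S : Submodule A Y)
    (hS : Function.Surjective (fun g : Q →ₗ[A] S => g.comp σ))
    (hY : Function.Injective (fun g : Q →ₗ[A] Y => g.comp σ)) :
    Function.Injective (fun g : Q →ₗ[A] Y ⧸ S => g.comp σ) := by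
  suffices h_zero : ∀ g : Q →ₗ[A] Y ⧸ S, g.comp σ = 0 → g = 0 by
    intro g₁ g₂ h
    rw [← sub_eq_zero] at h ⊢
    exact h_zero _ (by rwa [LinearMap.sub_comp])
  intro g hg
  obtain ⟨h, rfl⟩ := Module.projective_lifting_property S.mkQ g S.mkQ_surjective
  rw [LinearMap.comp_assoc, ← LinearMap.range_le_ker_iff, Submodule.ker_mkQ] at hg
  rw [← LinearMap.range_le_ker_iff, Submodule.ker_mkQ]
  exact range_le_of_range_comp_le σ S hS hY hg

end

theorem homSigma_bijective_on_im_ker_coker_general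
    (A : Type) [Ring A]
    (P Q : Type) [AddCommGroup P] [AddCommGroup Q] [Module A P] [Module A Q]
    (hQ : Module.Projective A Q)
    (σ : P →ₗ[A] Q)
    (M N : Type) [AddCommGroup M] [AddCommGroup N] [Module A M] [Module A N]
    (hM : Function.Bijective (fun g : Q →ₗ[A] M => g.comp σ))
    (hN : Function.Bijective (fun g : Q →ₗ[A] N => g.comp σ))
    -- `D_σ` is closed under quotients
    (hD : ∀ (X : Type) [AddCommGroup X], ∀ [Module A X], ∀ (S : Submodule A X),
      Function.Surjective (fun g : Q →ₗ[A] X => g.comp σ) →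
      Function.Surjective (fun g : Q →ₗ[A] (X ⧸ S) => g.comp σ))
    -- `F_σ` is closed under submodules
    (hF : ∀ (X : Type) [AddCommGroup X], ∀ [Module A X], ∀ (S : Submodule A X),
      Function.Injective (fun g : Q →ₗ[A] X => g.comp σ) →
      Function.Injective (fun g : Q →ₗ[A] S => g.comp σ))
    (ω : M →ₗ[A] N) :
    Function.Bijective (fun g : Q →ₗ[A] (LinearMap.range ω) => g.comp σ) ∧
    Function.Bijective (fun g : Q →ₗ[A] (LinearMap.ker ω) => g.comp σ) ∧
    Function.Bijective (fun g : Q →ₗ[A] (N ⧸ LinearMap.range ω) => g.comp σ) := by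
  have h_range : Function.Bijective (fun g : Q →ₗ[A] LinearMap.range ω => g.comp σ) :=
    ⟨hF N _ hN.1, surjective_comp_right_of_linearEquiv σ ω.quotKerEquivRange (hD M _ hM.2)⟩
  exact ⟨h_range,
    ⟨hF M _ hM.1, surjective_comp_right_ker σ ω hM.2 hN.1⟩,
    ⟨injective_comp_right_quotient σ _ h_range.2 hN.1, hD N _ hN.2⟩⟩

/-- Let `σ : P → Q` be a map of projective modules and `ω : M → N` a map
between modules on which `Hom_A(σ, −)` is bijective. If the class `D_σ` (surjectivity of
`Hom_A(σ,−)`) is closed under quotients and `F_σ` (injectivity) is closed under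
submodules, then `Hom_A(σ, −)` is bijective on the image, kernel and cokernel of `ω`. -/
theorem homSigma_bijective_on_im_ker_coker
    (A : Type) [Ring A]
    (P Q : Type) [AddCommGroup P] [AddCommGroup Q] [Module A P] [Module A Q]
    (hP : Module.Projective A P) (hQ : Module.Projective A Q)
    (σ : P →ₗ[A] Q)
    (M N : Type) [AddCommGroup M] [AddCommGroup N] [Module A M] [Module A N]
    (hM : Function.Bijective (fun g : Q →ₗ[A] M => g.comp σ))
    (hN : Function.Bijective (fun g : Q →ₗ[A] N => g.comp σ))
    -- `D_σ` is closed under quotients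
    (hD : ∀ (X : Type) [AddCommGroup X], ∀ [Module A X], ∀ (S : Submodule A X),
      Function.Surjective (fun g : Q →ₗ[A] X => g.comp σ) →
      Function.Surjective (fun g : Q →ₗ[A] (X ⧸ S) => g.comp σ))
    -- `F_σ` is closed under submodules
    (hF : ∀ (X : Type) [AddCommGroup X], ∀ [Module A X], ∀ (S : Submodule A X),
      Function.Injective (fun g : Q →ₗ[A] X => g.comp σ) →
      Function.Injective (fun g : Q →ₗ[A] S => g.comp σ))
    (ω : M →ₗ[A] N) :
    Function.Bijective (fun g : Q →ₗ[A] (LinearMap.range ω) => g.comp σ) ∧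
    Function.Bijective (fun g : Q →ₗ[A] (LinearMap.ker ω) => g.comp σ) ∧
    Function.Bijective (fun g : Q →ₗ[A] (N ⧸ LinearMap.range ω) => g.comp σ) :=
  homSigma_bijective_on_im_ker_coker_general A P Q hQ σ M N hM hN hD hF ω
end

section
/- Let A be a ring, T₀ a right A-module, and φ : A → T₀ an A-linear map such that every A-linear map from A to a module generated by T₀ (i.e., a quotient of a direct sum of copies of T₀) factors through φ. Then Ker(φ) = Ann(T₀), where Ann(T₀) = {a ∈ A : t·a = 0 for all t ∈ T₀}. -/
/-- If `φ : A → T₀` is a left `Gen(T₀)`-approximation of `A` (every map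
from `A` to a module generated by `T₀` factors through `φ`), then `Ker(φ)` equals the
annihilator of `T₀`. -/
theorem ker_approx_eq_annihilator
    (A : Type) [Ring A]
    (T₀ : Type) [AddCommGroup T₀] [Module A T₀]
    (φ : A →ₗ[A] T₀)
    (happrox : ∀ (X : Type) [AddCommGroup X], ∀ [Module A X],
      (∃ (ι : Type) (g : (ι →₀ T₀) →ₗ[A] X), Function.Surjective g) →
      ∀ ψ : A →ₗ[A] X, ∃ χ : T₀ →ₗ[A] X, χ.comp φ = ψ) :
    ∀ a : A, φ a = 0 ↔ ∀ t : T₀, a • t = 0 := by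
  intro a
  constructor
  · intro h t
    obtain ⟨χ, hχ⟩ := happrox T₀
      ⟨Unit, Finsupp.lapply (), fun m => ⟨Finsupp.single () m, by simp⟩⟩
      (LinearMap.toSpanSingleton A T₀ t)
    have := congrArg (fun f => f a) hχ
    simp only [LinearMap.comp_apply, h, map_zero, LinearMap.toSpanSingleton_apply] at this
    exact this.symm
  · intro h
    have : φ a = a • φ 1 := by rw [← map_smul, smul_eq_mul, mul_one]
    rw [this, h]
end

section
/- Let f : A → B be a ring epimorphism, let σ : P → Q be a homomorphism of finitely generated projective right A-modules, and suppose that for every right B-module X (restricted to A via f) the map Hom_A(σ, X) is bijective. Then σ ⊗_A B : P ⊗_A B → Q ⊗_A B is an isomorphism of right B-modules. -/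
/-!
Under the adjunction `Hom_A(M, X) ≅ Hom_B(B ⊗_A M, X)`, precomposition with `σ` on
`A`-linear maps into a `B`-module `X` becomes precomposition with `σ ⊗_A B`. So `Hom_B(σ ⊗_A B, X)`
is bijective for every `B`-module `X`, and a Yoneda argument in `B`-modules shows that
`σ ⊗_A B` is an isomorphism: testing against its cokernel gives surjectivity, and lifting the
identity of `B ⊗_A P` along `σ ⊗_A B` gives a left inverse.
-/

open TensorProduct

universe u

namespace LinearMap

theorem bijective_of_bijective_precomp {S : Type*} {M N : Type u} [Ring S]
    [AddCommGroup M] [Module S M] [AddCommGroup N] [Module S N] (f : M →ₗ[S] N)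
    (h : ∀ (X : Type u) [AddCommGroup X] [Module S X],
      Function.Bijective fun g : N →ₗ[S] X => g ∘ₗ f) :
    Function.Bijective f := by
  constructor
  · obtain ⟨g, hg⟩ := (h M).surjective LinearMap.id
    exact Function.LeftInverse.injective (g := g) (LinearMap.congr_fun hg)
  · exact range_eq_top.mp (range_eq_top_of_cancel fun _ _ huv => (h _).injective huv)

section baseChange

variable {R S M N X : Type*} [CommSemiring R] [CommSemiring S] [Algebra R S]
  [AddCommMonoid M] [Module R M] [AddCommMonoid N] [Module R N]
  [AddCommMonoid X] [Module R X] [Module S X] [IsScalarTower R S X]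

theorem liftBaseChange_comp_baseChange (l : N →ₗ[R] X) (σ : M →ₗ[R] N) :
    l.liftBaseChange S ∘ₗ σ.baseChange S = (l ∘ₗ σ).liftBaseChange S := by
  ext
  simp

theorem bijective_precomp_baseChange (σ : M →ₗ[R] N)
    (h : Function.Bijective fun g : N →ₗ[R] X => g ∘ₗ σ) :
    Function.Bijective fun g : S ⊗[R] N →ₗ[S] X => g ∘ₗ σ.baseChange S := by
  let eM := liftBaseChangeEquiv (M := M) (N := X) (R := R) S
  let eN := liftBaseChangeEquiv (M := N) (N := X) (R := R) S
  have hconj : (fun g : S ⊗[R] N →ₗ[S] X => g ∘ₗ σ.baseChange S) =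
      eM ∘ (fun g : N →ₗ[R] X => g ∘ₗ σ) ∘ eN.symm := by
    funext g
    conv_lhs => rw [← eN.apply_symm_apply g]
    exact liftBaseChange_comp_baseChange _ σ
  rw [hconj]
  exact (eM.bijective.comp h).comp eN.symm.bijective

end baseChange

end LinearMap

theorem baseChange_iso_of_hom_bijective_general
    (A B : Type) [CommRing A] [CommRing B] [Algebra A B]
    (P Q : Type) [AddCommGroup P] [AddCommGroup Q] [Module A P] [Module A Q]
    (σ : P →ₗ[A] Q)
    (hhom : ∀ (X : Type) [AddCommGroup X], ∀ [Module A X] [Module B X],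
      ∀ [IsScalarTower A B X],
      Function.Bijective (fun g : Q →ₗ[A] X => g.comp σ)) :
    Function.Bijective (LinearMap.baseChange B σ : B ⊗[A] P →ₗ[B] B ⊗[A] Q) := by
  refine LinearMap.bijective_of_bijective_precomp _ fun X _ _ => ?_
  let _ : Module A X := Module.compHom X (algebraMap A B)
  have : IsScalarTower A B X := IsScalarTower.of_compHom A B X
  exact LinearMap.bijective_precomp_baseChange σ (hhom X)

/-- Let `f : A → B` be a ring epimorphism and `σ : P → Q` a map of
finitely generated projective `A`-modules such that `Hom_A(σ, X)` is bijective for every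
`B`-module `X` (restricted to `A` along `f`). Then `σ ⊗_A B` is an isomorphism of
`B`-modules. -/
theorem baseChange_iso_of_hom_bijective
    (A B : Type) [CommRing A] [CommRing B] [Algebra A B]
    (hf : IsRingEpi (algebraMap A B))
    (P Q : Type) [AddCommGroup P] [AddCommGroup Q] [Module A P] [Module A Q]
    (hP : Module.Projective A P) (hQ : Module.Projective A Q)
    (hPfg : Module.Finite A P) (hQfg : Module.Finite A Q)
    (σ : P →ₗ[A] Q)
    (hhom : ∀ (X : Type) [AddCommGroup X], ∀ [Module A X] [Module B X],
      ∀ [IsScalarTower A B X],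
      Function.Bijective (fun g : Q →ₗ[A] X => g.comp σ)) :
    Function.Bijective (LinearMap.baseChange B σ : B ⊗[A] P →ₗ[B] B ⊗[A] Q) :=
  baseChange_iso_of_hom_bijective_general A B P Q σ hhom
end
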